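/- Let r be a positive odd integer, r' = (r+1)/2, and let P = {p_1,…,p_{r'}}, Q = {q_0,q_1,…,q_{r'}} ⊆ [n] with q_0 < p_1 < q_1 < p_2 < ⋯ < p_{r'} < q_{r'}, and X ⊆ [n]∖(P∪Q). Then: (a) X∪P and X∪Q are (r+2)-interlaced, X∪Q surrounds X∪P, and |X∪Q| = |X∪P| + 1; in particular X∪P and X∪Q are not weakly r-separated; (b) for any two distinct sets S, S' ∈ {P, Q} ∪ N(P,Q) with {S, S'} ≠ {P, Q}, the sets X∪S and X∪S' are weakly r-separated. Thus {X∪P, X∪Q} is the unique pair of not weakly r-separated sets in the collection {X∪S : S ∈ {P,Q} ∪ N(P,Q)}. -/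

import Mathlib

open Finset

/-- An alternating sequence for the pair of sets `A`, `B`: a strictly increasing
sequence whose odd-position elements lie in one of `A \ B`, `B \ A` and whose
even-position elements lie in the other. -/
def IsAltSeq (A B : Finset ℕ) {m : ℕ} (f : Fin m → ℕ) : Prop :=
  StrictMono f ∧
    ((∀ j : Fin m, (j : ℕ) % 2 = 0 → f j ∈ A \ B) ∧
        (∀ j : Fin m, (j : ℕ) % 2 = 1 → f j ∈ B \ A) ∨
      (∀ j : Fin m, (j : ℕ) % 2 = 0 → f j ∈ B \ A) ∧
        (∀ j : Fin m, (j : ℕ) % 2 = 1 → f j ∈ A \ B))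

/-- `altLen A B` is the maximum length of an alternating sequence for `A`, `B`. -/
noncomputable def altLen (A B : Finset ℕ) : ℕ :=
  sSup {m : ℕ | ∃ f : Fin m → ℕ, IsAltSeq A B f}

/-- `A` surrounds `B`:  `min (A \ B) < min (B \ A)` and `max (B \ A) < max (A \ B)`. -/
def Surrounds (A B : Finset ℕ) : Prop :=
  (A \ B).min < (B \ A).min ∧ (B \ A).max < (A \ B).max

/-- Weak `r`-separation for an odd `r`. -/
def WeaklySep (r : ℕ) (A B : Finset ℕ) : Prop :=
  altLen A B ≤ r + 2 ∧
    (altLen A B = r + 2 →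
      Surrounds A B ∧ A.card ≤ B.card ∨ Surrounds B A ∧ B.card ≤ A.card)

/-!
Interleaving `q₀ < p₁ < q₁ < ⋯ < p_{r'} < q_{r'}` is an alternating sequence for `X ∪ P`, `X ∪ Q`
of length `r + 2 = |P ∪ Q|`. For any `S, S' ⊆ P ∪ Q` an alternating sequence of `X ∪ S`, `X ∪ S'`
runs through their symmetric difference, which lies in `P ∪ Q`; so `r + 2` is the largest possible
value of `alt`, and a sequence attaining it must be the interleaving itself. Its parity classes
are then `Q` and `P`, which forces `{S, S'} = {P, Q}`: every other pair has `alt < r + 2` and is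
weakly `r`-separated. The pair `X ∪ P`, `X ∪ Q` is not, because `X ∪ Q` surrounds `X ∪ P`
(through `q₀` and `q_{r'}`) while being the larger set.
-/

open scoped symmDiff

namespace Finset

variable {α : Type*}

section DecidableEq

variable [DecidableEq α]

lemma union_sdiff_union_subset (X S S' : Finset α) : (X ∪ S) \ (X ∪ S') ⊆ S \ S' := by
  intro a
  simp only [mem_sdiff, mem_union]
  tauto

lemma union_symmDiff_union_subset (X S S' : Finset α) : (X ∪ S) ∆ (X ∪ S') ⊆ S ∪ S' := by
  rw [symmDiff_def]
  exact union_subset_union ((union_sdiff_union_subset X S S').trans sdiff_subset)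
    ((union_sdiff_union_subset X S' S).trans sdiff_subset)

lemma union_sdiff_union_of_disjoint {X S S' : Finset α} (hXS : Disjoint X S)
    (hSS' : Disjoint S S') : (X ∪ S) \ (X ∪ S') = S := by
  calc (X ∪ S) \ (X ∪ S') = ((X ∪ S) \ X) \ S' := sdiff_sdiff_left.symm
    _ = S := by rw [union_sdiff_cancel_left hXS, sdiff_eq_self_of_disjoint hSS']

lemma eq_and_eq_of_subset_sdiff {P Q S S' : Finset α} (hS : S ⊆ P ∪ Q) (hS' : S' ⊆ P ∪ Q)
    (hP : P ⊆ S \ S') (hQ : Q ⊆ S' \ S) : S = P ∧ S' = Q := by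
  simp only [subset_iff, mem_union, mem_sdiff] at *
  constructor <;> ext a <;> grind

end DecidableEq

variable [LinearOrder α]

lemma min_lt_min_of_mem {s t : Finset α} {a : α} (ha : a ∈ s) (h : ∀ b ∈ t, a < b) :
    s.min < t.min := by
  refine (min_le ha).trans_lt ?_
  rw [min_eq_inf_withTop, Finset.lt_inf_iff (WithTop.coe_lt_top a)]
  exact fun b hb => WithTop.coe_lt_coe.2 (h b hb)

lemma max_lt_max_of_mem {s t : Finset α} {a : α} (ha : a ∈ t) (h : ∀ b ∈ s, b < a) :
    s.max < t.max := by
  refine lt_of_lt_of_le ?_ (le_max ha)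
  rw [max_eq_sup_withBot, Finset.sup_lt_iff (WithBot.bot_lt_coe a)]
  exact fun b hb => WithBot.coe_lt_coe.2 (h b hb)

end Finset

lemma StrictMono.eq_of_forall_mem_image {α : Type*} [LinearOrder α] {m : ℕ} {f g : Fin m → α}
    (hf : StrictMono f) (hg : StrictMono g) (hfg : ∀ j, f j ∈ univ.image g) : f = g := by
  have hcard : #(univ.image g) = m := by rw [card_image_of_injective _ hg.injective, card_fin]
  exact (orderEmbOfFin_unique hcard hfg hf).trans
    (orderEmbOfFin_unique hcard (fun j => mem_image_of_mem g (mem_univ j)) hg).symm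

section AltLen

variable {A B : Finset ℕ}

lemma IsAltSeq.mem_symmDiff {m : ℕ} {f : Fin m → ℕ} (hf : IsAltSeq A B f) (j : Fin m) :
    f j ∈ A ∆ B := by
  suffices f j ∈ A \ B ∨ f j ∈ B \ A by simpa only [Finset.mem_symmDiff, mem_sdiff]
  rcases Nat.mod_two_eq_zero_or_one (j : ℕ) with h | h <;>
    rcases hf.2 with ⟨h0, h1⟩ | ⟨h0, h1⟩
  exacts [.inl (h0 j h), .inr (h0 j h), .inr (h1 j h), .inl (h1 j h)]

lemma IsAltSeq.le_card_of_subset {m : ℕ} {f : Fin m → ℕ} (hf : IsAltSeq A B f) {U : Finset ℕ}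
    (hU : A ∆ B ⊆ U) : m ≤ #U := by
  simpa using
    card_le_card_of_injOn (s := univ) f (fun j _ => hU (hf.mem_symmDiff j)) hf.1.injective.injOn

lemma bddAbove_isAltSeq_lengths (A B : Finset ℕ) :
    BddAbove {m : ℕ | ∃ f : Fin m → ℕ, IsAltSeq A B f} :=
  ⟨#(A ∆ B), fun _ ⟨_, hf⟩ => hf.le_card_of_subset subset_rfl⟩

lemma IsAltSeq.le_altLen {m : ℕ} {f : Fin m → ℕ} (hf : IsAltSeq A B f) : m ≤ altLen A B :=
  le_csSup (bddAbove_isAltSeq_lengths A B) ⟨f, hf⟩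

lemma exists_isAltSeq_altLen (A B : Finset ℕ) : ∃ f : Fin (altLen A B) → ℕ, IsAltSeq A B f :=
  Nat.sSup_mem (s := {m : ℕ | ∃ f : Fin m → ℕ, IsAltSeq A B f})
    ⟨0, Fin.elim0, fun a => a.elim0, .inl ⟨fun j => j.elim0, fun j => j.elim0⟩⟩
    (bddAbove_isAltSeq_lengths A B)

lemma altLen_le_card_of_subset {U : Finset ℕ} (hU : A ∆ B ⊆ U) : altLen A B ≤ #U := by
  obtain ⟨f, hf⟩ := exists_isAltSeq_altLen A B
  exact hf.le_card_of_subset hU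

lemma Surrounds.not_surrounds (h : Surrounds A B) : ¬ Surrounds B A :=
  fun h' => lt_asymm h.1 h'.1

lemma weaklySep_of_altLen_lt {r : ℕ} (h : altLen A B < r + 2) : WeaklySep r A B :=
  ⟨h.le, fun h' => absurd h' h.ne⟩

lemma not_weaklySep_of_surrounds {r : ℕ} (h : altLen A B = r + 2) (hBA : Surrounds B A)
    (hcard : #A < #B) : ¬ WeaklySep r A B := by
  rintro ⟨-, hsep⟩
  rcases hsep h with ⟨hAB, -⟩ | ⟨-, hle⟩
  exacts [hBA.not_surrounds hAB, hle.not_gt hcard]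

end AltLen

section Interlaces

variable {k : ℕ} (p : Fin k → ℕ) (q : Fin (k + 1) → ℕ)

def Interlaces : Prop :=
  ∀ i : Fin k, q i.castSucc < p i ∧ p i < q i.succ

def interleave (j : Fin (2 * k + 1)) : ℕ :=
  if h : (j : ℕ) % 2 = 0 then q ⟨j / 2, by omega⟩ else p ⟨j / 2, by omega⟩

lemma interleave_of_eq_two_mul {j : Fin (2 * k + 1)} {i : Fin (k + 1)} (hj : (j : ℕ) = 2 * i) :
    interleave p q j = q i := by
  rw [interleave, dif_pos (by omega)]
  exact congrArg q (Fin.ext (by simp only; omega))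

lemma interleave_of_eq_two_mul_add_one {j : Fin (2 * k + 1)} {i : Fin k}
    (hj : (j : ℕ) = 2 * i + 1) : interleave p q j = p i := by
  rw [interleave, dif_neg (by omega)]
  exact congrArg p (Fin.ext (by simp only; omega))

lemma forall_even_interleave_mem_iff {S : Finset ℕ} :
    (∀ j : Fin (2 * k + 1), (j : ℕ) % 2 = 0 → interleave p q j ∈ S) ↔ univ.image q ⊆ S := by
  simp only [image_subset_iff, mem_univ, true_implies]
  refine ⟨fun h i => ?_, fun h j hj => ?_⟩
  · rw [← interleave_of_eq_two_mul p q (j := ⟨2 * i, by omega⟩) rfl]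
    exact h _ (by simp)
  · simpa [interleave, hj] using h _

lemma forall_odd_interleave_mem_iff {S : Finset ℕ} :
    (∀ j : Fin (2 * k + 1), (j : ℕ) % 2 = 1 → interleave p q j ∈ S) ↔ univ.image p ⊆ S := by
  simp only [image_subset_iff, mem_univ, true_implies]
  refine ⟨fun h i => ?_, fun h j hj => ?_⟩
  · rw [← interleave_of_eq_two_mul_add_one p q (j := ⟨2 * i + 1, by omega⟩) rfl]
    exact h _ (by simp)
  · simpa [interleave, hj] using h _

lemma isAltSeq_interleave_iff {A B : Finset ℕ} (hmono : StrictMono (interleave p q)) :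
    IsAltSeq A B (interleave p q) ↔
      univ.image q ⊆ A \ B ∧ univ.image p ⊆ B \ A ∨
        univ.image q ⊆ B \ A ∧ univ.image p ⊆ A \ B := by
  simp only [IsAltSeq, hmono, true_and, forall_even_interleave_mem_iff,
    forall_odd_interleave_mem_iff]

lemma image_interleave : univ.image (interleave p q) = univ.image p ∪ univ.image q := by
  ext a
  simp only [mem_image, mem_univ, true_and, mem_union]
  constructor
  · rintro ⟨j, rfl⟩
    by_cases h : (j : ℕ) % 2 = 0
    · exact .inr ⟨⟨j / 2, by omega⟩, (interleave_of_eq_two_mul p q (by simp only; omega)).symm⟩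
    · exact .inl ⟨⟨j / 2, by omega⟩,
        (interleave_of_eq_two_mul_add_one p q (by simp only; omega)).symm⟩
  · rintro (⟨i, rfl⟩ | ⟨i, rfl⟩)
    exacts [⟨⟨2 * i + 1, by omega⟩, interleave_of_eq_two_mul_add_one p q rfl⟩,
      ⟨⟨2 * i, by omega⟩, interleave_of_eq_two_mul p q rfl⟩]

variable {p q}

lemma Interlaces.strictMono_interleave (h : Interlaces p q) : StrictMono (interleave p q) := by
  refine Fin.strictMono_iff_lt_succ.2 fun ⟨j, hj⟩ => ?_
  obtain ⟨i, rfl | rfl⟩ := Nat.even_or_odd' j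
  · rw [interleave_of_eq_two_mul p q (i := ⟨i, by omega⟩) rfl,
      interleave_of_eq_two_mul_add_one p q (i := ⟨i, by omega⟩) rfl]
    exact (h ⟨i, by omega⟩).1
  · rw [interleave_of_eq_two_mul_add_one p q (i := ⟨i, by omega⟩) rfl,
      interleave_of_eq_two_mul p q (i := ⟨i + 1, by omega⟩) (by simp; omega)]
    exact (h ⟨i, by omega⟩).2

lemma Interlaces.strictMono_right (h : Interlaces p q) : StrictMono q :=
  Fin.strictMono_iff_lt_succ.2 fun i => (h i).1.trans (h i).2

lemma Interlaces.card_image_union (h : Interlaces p q) :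
    #(univ.image p ∪ univ.image q) = 2 * k + 1 := by
  rw [← image_interleave, card_image_of_injective _ h.strictMono_interleave.injective, card_univ,
    Fintype.card_fin]

-- `interleave` is injective, so its `2k+1` values cannot be covered by the at most `k` values
-- of `p` and `k+1` values of `q` unless both counts are exact and disjoint.
lemma Interlaces.card_image_and_disjoint (h : Interlaces p q) :
    #(univ.image p) = k ∧ #(univ.image q) = k + 1 ∧ Disjoint (univ.image p) (univ.image q) := by
  have hunion := card_union_add_card_inter (univ.image p) (univ.image q)
  have hp : #(univ.image p) ≤ k := card_image_le.trans_eq (card_fin k)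
  have hq : #(univ.image q) ≤ k + 1 := card_image_le.trans_eq (card_fin (k + 1))
  rw [h.card_image_union] at hunion
  exact ⟨by omega, by omega, disjoint_iff_inter_eq_empty.2 (card_eq_zero.1 (by omega))⟩

lemma Interlaces.min_lt_min (h : Interlaces p q) : (univ.image q).min < (univ.image p).min := by
  refine min_lt_min_of_mem (mem_image_of_mem q (mem_univ 0)) ?_
  simp only [mem_image, mem_univ, true_and, forall_exists_index, forall_apply_eq_imp_iff]
  exact fun i => (h.strictMono_right.monotone (Fin.zero_le _)).trans_lt (h i).1

lemma Interlaces.max_lt_max (h : Interlaces p q) : (univ.image p).max < (univ.image q).max := by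
  refine max_lt_max_of_mem (mem_image_of_mem q (mem_univ (Fin.last k))) ?_
  simp only [mem_image, mem_univ, true_and, forall_exists_index, forall_apply_eq_imp_iff]
  exact fun i => (h i).2.trans_le (h.strictMono_right.monotone (Fin.le_last _))

variable {X : Finset ℕ}

lemma Interlaces.union_sdiff_union (h : Interlaces p q)
    (hX : Disjoint X (univ.image p ∪ univ.image q)) :
    (X ∪ univ.image p) \ (X ∪ univ.image q) = univ.image p ∧
      (X ∪ univ.image q) \ (X ∪ univ.image p) = univ.image q := by
  obtain ⟨hXp, hXq⟩ := disjoint_union_right.1 hX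
  obtain ⟨-, -, hpq⟩ := h.card_image_and_disjoint
  exact ⟨union_sdiff_union_of_disjoint hXp hpq, union_sdiff_union_of_disjoint hXq hpq.symm⟩

lemma Interlaces.altLen_union (h : Interlaces p q)
    (hX : Disjoint X (univ.image p ∪ univ.image q)) :
    altLen (X ∪ univ.image p) (X ∪ univ.image q) = 2 * k + 1 := by
  refine le_antisymm ?_ (IsAltSeq.le_altLen (f := interleave p q) ?_)
  · exact h.card_image_union ▸ altLen_le_card_of_subset (union_symmDiff_union_subset _ _ _)
  · obtain ⟨hp, hq⟩ := h.union_sdiff_union hX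
    rw [isAltSeq_interleave_iff p q h.strictMono_interleave, hp, hq]
    exact .inr ⟨subset_rfl, subset_rfl⟩

lemma Interlaces.surrounds_union (h : Interlaces p q)
    (hX : Disjoint X (univ.image p ∪ univ.image q)) :
    Surrounds (X ∪ univ.image q) (X ∪ univ.image p) := by
  obtain ⟨hp, hq⟩ := h.union_sdiff_union hX
  rw [Surrounds, hp, hq]
  exact ⟨h.min_lt_min, h.max_lt_max⟩

lemma Interlaces.card_union (h : Interlaces p q)
    (hX : Disjoint X (univ.image p ∪ univ.image q)) :
    #(X ∪ univ.image q) = #(X ∪ univ.image p) + 1 := by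
  obtain ⟨hXp, hXq⟩ := disjoint_union_right.1 hX
  obtain ⟨hp, hq, -⟩ := h.card_image_and_disjoint
  rw [card_union_of_disjoint hXq, card_union_of_disjoint hXp, hp, hq, add_assoc]

lemma Interlaces.altLen_union_lt (h : Interlaces p q) {S S' : Finset ℕ}
    (hS : S ⊆ univ.image p ∪ univ.image q) (hS' : S' ⊆ univ.image p ∪ univ.image q)
    (hpq : ¬ (S = univ.image p ∧ S' = univ.image q))
    (hqp : ¬ (S = univ.image q ∧ S' = univ.image p)) :
    altLen (X ∪ S) (X ∪ S') < 2 * k + 1 := by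
  have hsub := (union_symmDiff_union_subset X S S').trans (union_subset hS hS')
  refine (h.card_image_union ▸ altLen_le_card_of_subset hsub).lt_of_ne fun heq => ?_
  obtain ⟨f, hf⟩ : ∃ f : Fin (2 * k + 1) → ℕ, IsAltSeq (X ∪ S) (X ∪ S') f :=
    heq ▸ exists_isAltSeq_altLen _ _
  obtain rfl : f = interleave p q := hf.1.eq_of_forall_mem_image h.strictMono_interleave
    fun j => image_interleave p q ▸ hsub (hf.mem_symmDiff j)
  rw [isAltSeq_interleave_iff p q h.strictMono_interleave] at hf
  rcases hf with ⟨hq, hp⟩ | ⟨hq, hp⟩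
  · refine hqp (eq_and_eq_of_subset_sdiff (by rwa [union_comm]) (by rwa [union_comm]) ?_ ?_)
    exacts [hq.trans (union_sdiff_union_subset X S S'), hp.trans (union_sdiff_union_subset X S' S)]
  · refine hpq (eq_and_eq_of_subset_sdiff hS hS' ?_ ?_)
    exacts [hp.trans (union_sdiff_union_subset X S S'), hq.trans (union_sdiff_union_subset X S' S)]

end Interlaces

theorem neighbors_unique_bad_pair_general (r n : ℕ) (hr : Odd r)
    (p : Fin ((r + 1) / 2) → ℕ) (q : Fin ((r + 1) / 2 + 1) → ℕ)
    (hchain : ∀ i : Fin ((r + 1) / 2), q i.castSucc < p i ∧ p i < q i.succ)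
    (P Q : Finset ℕ)
    (hP : P = Finset.image p Finset.univ) (hQ : Q = Finset.image q Finset.univ)
    (X : Finset ℕ) (hX : X ⊆ Finset.Icc 1 n \ (P ∪ Q)) :
    altLen (X ∪ P) (X ∪ Q) = r + 2 ∧
    Surrounds (X ∪ Q) (X ∪ P) ∧
    (X ∪ Q).card = (X ∪ P).card + 1 ∧
    ¬ WeaklySep r (X ∪ P) (X ∪ Q) ∧
    (∀ S S' : Finset ℕ,
      S ⊆ P ∪ Q → (r + 1) / 2 ≤ S.card → S.card ≤ (r + 1) / 2 + 1 →
      S' ⊆ P ∪ Q → (r + 1) / 2 ≤ S'.card → S'.card ≤ (r + 1) / 2 + 1 →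
      S ≠ S' → ¬ (S = P ∧ S' = Q) → ¬ (S = Q ∧ S' = P) →
      WeaklySep r (X ∪ S) (X ∪ S')) := by
  subst hP hQ
  have hk : r + 2 = 2 * ((r + 1) / 2) + 1 := by
    obtain ⟨t, rfl⟩ := hr
    omega
  have hXpq : Disjoint X (univ.image p ∪ univ.image q) := disjoint_of_subset_left hX sdiff_disjoint
  have halt : altLen (X ∪ univ.image p) (X ∪ univ.image q) = r + 2 :=
    hk ▸ Interlaces.altLen_union hchain hXpq
  have hsurr := Interlaces.surrounds_union hchain hXpq
  have hcard := Interlaces.card_union hchain hXpq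
  refine ⟨halt, hsurr, hcard, not_weaklySep_of_surrounds halt hsurr (by omega), ?_⟩
  intro S S' hS _ _ hS' _ _ _ hpq hqp
  exact weaklySep_of_altLen_lt (hk ▸ Interlaces.altLen_union_lt hchain hS hS' hpq hqp)

/-- (a) X ∪ P and X ∪ Q are (r+2)-interlaced, X ∪ Q surrounds
X ∪ P, |X ∪ Q| = |X ∪ P| + 1, and X ∪ P, X ∪ Q are not weakly r-separated;
(b) any two distinct members S, S' of {P, Q} ∪ N(P,Q) other than the pair
{P, Q} give weakly r-separated sets X ∪ S and X ∪ S'.  (Here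
{P, Q} ∪ N(P,Q) = {S ⊆ P ∪ Q : r' ≤ |S| ≤ r' + 1} with r' = (r+1)/2.) -/
theorem neighbors_unique_bad_pair (r n : ℕ) (hr : Odd r)
    (p : Fin ((r + 1) / 2) → ℕ) (q : Fin ((r + 1) / 2 + 1) → ℕ)
    (hp : ∀ i, p i ∈ Finset.Icc 1 n) (hq : ∀ i, q i ∈ Finset.Icc 1 n)
    (hchain : ∀ i : Fin ((r + 1) / 2), q i.castSucc < p i ∧ p i < q i.succ)
    (P Q : Finset ℕ)
    (hP : P = Finset.image p Finset.univ) (hQ : Q = Finset.image q Finset.univ)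
    (X : Finset ℕ) (hX : X ⊆ Finset.Icc 1 n \ (P ∪ Q)) :
    altLen (X ∪ P) (X ∪ Q) = r + 2 ∧
    Surrounds (X ∪ Q) (X ∪ P) ∧
    (X ∪ Q).card = (X ∪ P).card + 1 ∧
    ¬ WeaklySep r (X ∪ P) (X ∪ Q) ∧
    (∀ S S' : Finset ℕ,
      S ⊆ P ∪ Q → (r + 1) / 2 ≤ S.card → S.card ≤ (r + 1) / 2 + 1 →
      S' ⊆ P ∪ Q → (r + 1) / 2 ≤ S'.card → S'.card ≤ (r + 1) / 2 + 1 →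
      S ≠ S' → ¬ (S = P ∧ S' = Q) → ¬ (S = Q ∧ S' = P) →
      WeaklySep r (X ∪ S) (X ∪ S')) :=
  neighbors_unique_bad_pair_general r n hr p q hchain P Q hP hQ X hX
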